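/- arXiv:1302.2506 — 2 statements merged into one kernel-verified Lean document; each statement's English description precedes it below -/
import Mathlib

section
/- Let Λ be a finitely generated free abelian group, (α_i)_{i ∈ I} a finite family of elements of Λ linearly independent over ℚ, and k an integral domain. Then for every map χ : Λ^{pos,sat} → k satisfying χ(0) = 1 and χ(λ + μ) = χ(λ)·χ(μ) (i.e. every homomorphism from the additive monoid Λ^{pos,sat} to the multiplicative monoid of k), there exists a unique subset S ⊆ I such that { λ ∈ Λ^{pos,sat} : χ(λ) ≠ 0 } = Λ^{pos,sat}_S. (This is the k-points statement underlying the paper's decomposition of the toric variety of characters 𝔠h(G) = Spec k[Λ^{pos,sat_G}] into the locally closed strata ∘𝔠(M) indexed by the standard parabolics P of G with Levi quotient M.) -/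
open scoped TensorProduct

/-! The stratum is `S = {i | χ (α i) ≠ 0}`. Clearing denominators in a rational expression
`λ = ∑ cᵢ αᵢ` with `cᵢ ≥ 0` gives `N • λ = ∑ mᵢ • αᵢ` with `N > 0` and `mᵢ ∈ ℕ` positive exactly
where `cᵢ` is, so `χ λ ^ N = ∏ χ (αᵢ) ^ mᵢ`; in a domain this is nonzero exactly when `c` is
supported in `S`. Uniqueness holds because, by linear independence, `αᵢ ∈ Λ^{pos,sat}_S` iff
`i ∈ S`. -/

/-- For a family `α : I → Λ` and a subset `S ⊆ I`, `posSatOn Λ α S` is the set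
`Λ^{pos,sat}_S` of elements of `Λ` that can be written (inside `ℚ ⊗[ℤ] Λ`) as a linear
combination of the `α i`, `i ∈ S`, with nonnegative rational coefficients.
For `S = Set.univ` this is the saturated positive span `Λ^{pos,sat}`. -/
def posSatOn (Λ : Type*) [AddCommGroup Λ] {I : Type*} [Fintype I]
    (α : I → Λ) (S : Set I) : Set Λ :=
  {lam | ∃ c : I → ℚ, (∀ i, 0 ≤ c i) ∧ (∀ i ∉ S, c i = 0) ∧
    ((1 : ℚ) ⊗ₜ[ℤ] lam : ℚ ⊗[ℤ] Λ) = ∑ i, c i • ((1 : ℚ) ⊗ₜ[ℤ] α i)}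

theorem one_tmul_injective_of_flat (R A M : Type*) [CommRing R] [CommRing A] [Algebra R A]
    [AddCommGroup M] [Module R M] [Module.Flat R M] (h : Function.Injective (algebraMap R A)) :
    Function.Injective fun x : M => ((1 : A) ⊗ₜ[R] x : A ⊗[R] M) := by
  have := (Module.Flat.rTensor_preserves_injective_linearMap (M := M) (Algebra.linearMap R A)
    h).comp (TensorProduct.lid R M).symm.injective
  simpa [Function.comp_def] using this

theorem exists_pos_nat_mul_eq_natCast {I : Type*} [Fintype I] (c : I → ℚ) (hc : ∀ i, 0 ≤ c i) :
    ∃ N : ℕ, 0 < N ∧ ∃ m : I → ℕ, ∀ i, (m i : ℚ) = N * c i := by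
  refine ⟨∏ i, (c i).den, Finset.prod_pos fun i _ => (c i).pos, ?_⟩
  have (i : I) : ∃ m : ℕ, (m : ℚ) = (∏ j, (c j).den : ℕ) * c i := by
    obtain ⟨q, hq⟩ := Finset.dvd_prod_of_mem (fun j => (c j).den) (Finset.mem_univ i)
    refine ⟨q * (c i).num.toNat, ?_⟩
    have hnum : ((c i).num.toNat : ℚ) = (c i).num := by
      exact_mod_cast Int.toNat_of_nonneg (Rat.num_nonneg.mpr (hc i))
    rw [hq, Nat.cast_mul, Nat.cast_mul, hnum, ← Rat.mul_den_eq_num]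
    ring
  choose m hm using this
  exact ⟨m, hm⟩

section Character

variable {Λ k : Type*} [AddCommMonoid Λ] [CommMonoid k] {M : AddSubmonoid Λ} {χ : Λ → k}

theorem map_nsmul_of_map_add (hχ0 : χ 0 = 1)
    (hχadd : ∀ x y, x ∈ M → y ∈ M → χ (x + y) = χ x * χ y) {x : Λ} (hx : x ∈ M) (n : ℕ) :
    χ (n • x) = χ x ^ n := by
  induction n with
  | zero => simpa using hχ0
  | succ n ih => rw [succ_nsmul, hχadd _ _ (M.nsmul_mem hx n) hx, ih, pow_succ]

theorem map_sum_nsmul_of_map_add (hχ0 : χ 0 = 1)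
    (hχadd : ∀ x y, x ∈ M → y ∈ M → χ (x + y) = χ x * χ y) {ι : Type*} (s : Finset ι)
    {f : ι → Λ} (hf : ∀ i, f i ∈ M) (m : ι → ℕ) :
    χ (∑ i ∈ s, m i • f i) = ∏ i ∈ s, χ (f i) ^ m i := by
  induction s using Finset.cons_induction with
  | empty => simpa using hχ0
  | cons a s ha ih =>
    rw [Finset.sum_cons, Finset.prod_cons,
      hχadd _ _ (M.nsmul_mem (hf a) _) (M.sum_mem fun i _ => M.nsmul_mem (hf i) _), ih,
      map_nsmul_of_map_add hχ0 hχadd (hf a)]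

end Character

namespace posSatOn

variable {Λ : Type*} [AddCommGroup Λ] {I : Type*} [Fintype I] {α : I → Λ}

def addSubmonoid (α : I → Λ) (S : Set I) : AddSubmonoid Λ where
  carrier := posSatOn Λ α S
  zero_mem' := ⟨0, fun _ => le_rfl, fun _ _ => rfl, by simp⟩
  add_mem' := by
    rintro x y ⟨c, hc0, hcS, hc⟩ ⟨d, hd0, hdS, hd⟩
    refine ⟨c + d, fun i => add_nonneg (hc0 i) (hd0 i), fun i hi => by simp [hcS i hi, hdS i hi],
      ?_⟩
    simp only [TensorProduct.tmul_add, hc, hd, Pi.add_apply, add_smul, Finset.sum_add_distrib]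

theorem mono {S T : Set I} (hST : S ⊆ T) : posSatOn Λ α S ⊆ posSatOn Λ α T :=
  fun _ ⟨c, hc0, hcS, hc⟩ => ⟨c, hc0, fun i hi => hcS i (mt (@hST i) hi), hc⟩

theorem apply_mem {S : Set I} {i : I} (hi : i ∈ S) : α i ∈ posSatOn Λ α S := by
  classical
  refine ⟨Pi.single i 1, Pi.single_nonneg.2 zero_le_one,
    fun j hj => Pi.single_eq_of_ne (ne_of_mem_of_not_mem hi hj).symm _, ?_⟩
  simp [Pi.single_apply, ite_smul]

theorem apply_mem_iff (hα : LinearIndependent ℚ fun i => ((1 : ℚ) ⊗ₜ[ℤ] α i : ℚ ⊗[ℤ] Λ))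
    {S : Set I} {i : I} : α i ∈ posSatOn Λ α S ↔ i ∈ S := by
  classical
  refine ⟨fun ⟨c, _, hcS, hc⟩ => ?_, apply_mem⟩
  have hci : c i = 1 := by
    simpa using Fintype.linearIndependent_iffₛ.mp hα c (Pi.single i 1)
      (by simp [← hc, Pi.single_apply, ite_smul]) i
  by_contra hi
  simp [hcS i hi] at hci

theorem exists_nsmul_eq_sum_nsmul [Module.Flat ℤ Λ] {c : I → ℚ} (hc0 : ∀ i, 0 ≤ c i) {x : Λ}
    (hx : ((1 : ℚ) ⊗ₜ[ℤ] x : ℚ ⊗[ℤ] Λ) = ∑ i, c i • ((1 : ℚ) ⊗ₜ[ℤ] α i)) :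
    ∃ N : ℕ, 0 < N ∧ ∃ m : I → ℕ, (∀ i, m i = 0 ↔ c i = 0) ∧ N • x = ∑ i, m i • α i := by
  obtain ⟨N, hN, m, hm⟩ := exists_pos_nat_mul_eq_natCast c hc0
  refine ⟨N, hN, m, fun i => ?_, one_tmul_injective_of_flat ℤ ℚ Λ (RingHom.injective_int _) ?_⟩
  · rw [← Nat.cast_eq_zero (R := ℚ), hm i, mul_eq_zero]
    simp [hN.ne']
  · simp only [TensorProduct.tmul_sum, TensorProduct.tmul_smul, hx, Finset.smul_sum,
      ← Nat.cast_smul_eq_nsmul ℚ, smul_smul, hm]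

theorem apply_ne_zero_iff_of_map_add [Module.Flat ℤ Λ] {k : Type*} [CommMonoidWithZero k]
    [NoZeroDivisors k] [Nontrivial k] {χ : Λ → k} (hχ0 : χ 0 = 1)
    (hχadd : ∀ x y, x ∈ posSatOn Λ α Set.univ → y ∈ posSatOn Λ α Set.univ →
      χ (x + y) = χ x * χ y)
    {c : I → ℚ} (hc0 : ∀ i, 0 ≤ c i) {x : Λ}
    (hx : ((1 : ℚ) ⊗ₜ[ℤ] x : ℚ ⊗[ℤ] Λ) = ∑ i, c i • ((1 : ℚ) ⊗ₜ[ℤ] α i)) :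
    χ x ≠ 0 ↔ ∀ i, c i ≠ 0 → χ (α i) ≠ 0 := by
  obtain ⟨N, hN, m, hm, hNx⟩ := exists_nsmul_eq_sum_nsmul hc0 hx
  have hxM : x ∈ addSubmonoid α Set.univ := ⟨c, hc0, fun i hi => absurd (Set.mem_univ i) hi, hx⟩
  have hpow : χ x ^ N = ∏ i, χ (α i) ^ m i := by
    rw [← map_nsmul_of_map_add hχ0 hχadd hxM N, hNx,
      map_sum_nsmul_of_map_add (M := addSubmonoid α Set.univ) hχ0 hχadd _
        (fun i => apply_mem (Set.mem_univ i)) m]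
  rw [← pow_ne_zero_iff hN.ne', hpow, Finset.prod_ne_zero_iff]
  simp only [Finset.mem_univ, true_imp_iff, ne_eq, pow_eq_zero_iff', hm, not_and, not_not]
  exact forall_congr' fun i => not_imp_not.symm

end posSatOn

theorem exists_unique_support_subset_of_char_general
    (Λ : Type*) [AddCommGroup Λ] [Module.Free ℤ Λ]
    (I : Type*) [Fintype I] (α : I → Λ)
    (hα : LinearIndependent ℚ fun i => ((1 : ℚ) ⊗ₜ[ℤ] α i : ℚ ⊗[ℤ] Λ))
    (k : Type*) [CommRing k] [IsDomain k]
    (χ : Λ → k) (hχ0 : χ 0 = 1)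
    (hχadd : ∀ lam mu : Λ, lam ∈ posSatOn Λ α Set.univ → mu ∈ posSatOn Λ α Set.univ →
      χ (lam + mu) = χ lam * χ mu) :
    ∃! S : Set I, {lam | lam ∈ posSatOn Λ α Set.univ ∧ χ lam ≠ 0} = posSatOn Λ α S := by
  refine ⟨{i | χ (α i) ≠ 0}, ?_, fun S hS => ?_⟩
  · ext x
    constructor
    · rintro ⟨⟨c, hc0, -, hx⟩, hχx⟩
      have hsupp := (posSatOn.apply_ne_zero_iff_of_map_add hχ0 hχadd hc0 hx).mp hχx
      exact ⟨c, hc0, fun i hi => not_imp_comm.mp (hsupp i) hi, hx⟩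
    · intro hxS
      refine ⟨posSatOn.mono (Set.subset_univ _) hxS, ?_⟩
      obtain ⟨c, hc0, hcS, hx⟩ := hxS
      exact (posSatOn.apply_ne_zero_iff_of_map_add hχ0 hχadd hc0 hx).mpr
        fun i => not_imp_comm.mp (hcS i)
  · ext i
    rw [← posSatOn.apply_mem_iff hα, ← hS]
    simp [posSatOn.apply_mem (Set.mem_univ i)]

/-- Let `Λ` be a finitely generated free abelian group, `(α i)_{i ∈ I}` a
finite family of elements of `Λ` linearly independent over `ℚ`, and `k` an integral domain.
For every map `χ` from the additive monoid `Λ^{pos,sat}` to the multiplicative monoid of `k`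
(i.e. `χ 0 = 1` and `χ (λ + μ) = χ λ * χ μ` for `λ, μ ∈ Λ^{pos,sat}`) there is a unique
subset `S ⊆ I` such that `{λ ∈ Λ^{pos,sat} | χ λ ≠ 0} = Λ^{pos,sat}_S`. -/
theorem exists_unique_support_subset_of_char
    (Λ : Type*) [AddCommGroup Λ] [Module.Free ℤ Λ] [Module.Finite ℤ Λ]
    (I : Type*) [Fintype I] (α : I → Λ)
    (hα : LinearIndependent ℚ fun i => ((1 : ℚ) ⊗ₜ[ℤ] α i : ℚ ⊗[ℤ] Λ))
    (k : Type*) [CommRing k] [IsDomain k]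
    (χ : Λ → k) (hχ0 : χ 0 = 1)
    (hχadd : ∀ lam mu : Λ, lam ∈ posSatOn Λ α Set.univ → mu ∈ posSatOn Λ α Set.univ →
      χ (lam + mu) = χ lam * χ mu) :
    ∃! S : Set I, {lam | lam ∈ posSatOn Λ α Set.univ ∧ χ lam ≠ 0} = posSatOn Λ α S :=
  exists_unique_support_subset_of_char_general Λ I α hα k χ hχ0 hχadd
end

section
/- Let A be a small category and let F', F'' : A → Cat be functors to the category of categories, and let T : F' ⟹ F'' be a natural transformation such that for every object a of A the functor T_a : F'(a) → F''(a) is fully faithful. Then the induced functor Glue(T) : Glue(F') → Glue(F''), which sends an object ((c_a)_a, (γ_φ)_φ) to ((T_{a}(c_a))_a, (T_{a2}(γ_φ))_φ) (using the equality F''(φ) ∘ T_{a1} = T_{a2} ∘ F'(φ)) and acts on morphisms by (f_a)_a ↦ (T_a(f_a))_a, is fully faithful. (This is Lemma 9.1.5 of the paper, stated at the level of ordinary categories; it is the statement that gluing a levelwise fully faithful family of functors yields a fully faithful functor between lax limits.) -/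
open CategoryTheory

universe w v' u' v u

namespace LaxLimitGlue

variable {A : Type u} [Category.{v} A]

/-- An object of the glued category (lax limit) `Glue(F)` of a functor `F : A ⥤ Cat`:
a family of objects `pt a : F.obj a` together with structure morphisms
`glue φ : (F.map φ).obj (pt a) ⟶ pt b` for every arrow `φ : a ⟶ b`, compatible with
identities and compositions (`γ_{ψ∘φ} = γ_ψ ∘ F(ψ)(γ_φ)`). -/
structure GlueObj (F : A ⥤ Cat.{v', u'}) where
  pt : ∀ a : A, F.obj a
  glue : ∀ {a b : A} (φ : a ⟶ b), (F.map φ).toFunctor.obj (pt a) ⟶ pt b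
  glue_id : ∀ a : A, glue (𝟙 a) = eqToHom (by rw [F.map_id]; rfl)
  glue_comp : ∀ {a b c : A} (φ : a ⟶ b) (ψ : b ⟶ c),
    glue (φ ≫ ψ) = eqToHom (by rw [F.map_comp]; rfl) ≫ (F.map ψ).toFunctor.map (glue φ) ≫ glue ψ

variable {F : A ⥤ Cat.{v', u'}}

/-- A morphism in the glued category `Glue(F)`: a family of morphisms `f a : X.pt a ⟶ Y.pt a`
in the fibers, compatible with the structure morphisms. -/
structure GlueHom (X Y : GlueObj F) where
  app : ∀ a : A, X.pt a ⟶ Y.pt a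
  naturality : ∀ {a b : A} (φ : a ⟶ b),
    (F.map φ).toFunctor.map (app a) ≫ Y.glue φ = X.glue φ ≫ app b

theorem GlueHom.ext' {X Y : GlueObj F} {f g : GlueHom X Y}
    (h : ∀ a, f.app a = g.app a) : f = g := by
  obtain ⟨fapp, _⟩ := f
  obtain ⟨gapp, _⟩ := g
  have : fapp = gapp := funext h
  subst this
  rfl

/-- The glued category (lax limit) of `F : A ⥤ Cat`. -/
instance instCategoryGlueObj : Category (GlueObj F) where
  Hom X Y := GlueHom X Y
  id X :=
    { app := fun a => 𝟙 (X.pt a)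
      naturality := by intro a b φ; simp }
  comp f g :=
    { app := fun a => GlueHom.app f a ≫ GlueHom.app g a
      naturality := by
        intro a b φ
        rw [Functor.map_comp, Category.assoc, GlueHom.naturality, ← Category.assoc,
          GlueHom.naturality, Category.assoc] }
  id_comp f := GlueHom.ext' fun a => Category.id_comp _
  comp_id f := GlueHom.ext' fun a => Category.comp_id _
  assoc f g h := GlueHom.ext' fun a => Category.assoc _ _ _

variable {G : A ⥤ Cat.{v', u'}}

/-- The functor `Glue(T) : Glue(F) ⥤ Glue(G)` induced by a natural transformation
`T : F ⟶ G`: it sends `((c_a)_a, (γ_φ)_φ)` to `((T_a (c_a))_a, (T_{a₂} (γ_φ))_φ)`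
(using the naturality equality `F''(φ) ∘ T_{a₁} = T_{a₂} ∘ F'(φ)`) and acts on morphisms
by `(f_a)_a ↦ (T_a (f_a))_a`. -/
def glueMap (T : F ⟶ G) : GlueObj F ⥤ GlueObj G where
  obj X :=
    { pt := fun a => (T.app a).toFunctor.obj (X.pt a)
      glue := fun {a b} φ =>
        eqToHom (Functor.congr_obj
          (show (T.app a).toFunctor ⋙ (G.map φ).toFunctor = (F.map φ).toFunctor ⋙ (T.app b).toFunctor from
            congrArg Cat.Hom.toFunctor (T.naturality φ).symm)
          (X.pt a)) ≫ (T.app b).toFunctor.map (X.glue φ)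
      glue_id := by
        intro a
        try dsimp only
        rw [X.glue_id, eqToHom_map, eqToHom_trans]
      glue_comp := by
        intro a b c φ ψ
        have hψ : (F.map ψ).toFunctor ⋙ (T.app c).toFunctor = (T.app b).toFunctor ⋙ (G.map ψ).toFunctor :=
            congrArg Cat.Hom.toFunctor (T.naturality ψ)
        have key := Functor.congr_hom hψ (X.glue φ)
        simp only [Functor.comp_map] at key
        try dsimp only
        rw [X.glue_comp]
        simp only [Functor.map_comp, eqToHom_map, Category.assoc, eqToHom_trans_assoc]
        rw [key]
        simp only [Category.assoc, eqToHom_trans_assoc] }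
  map {X Y} f :=
    { app := fun a => (T.app a).toFunctor.map (GlueHom.app f a)
      naturality := by
        intro a b φ
        have hφ : (T.app a).toFunctor ⋙ (G.map φ).toFunctor = (F.map φ).toFunctor ⋙ (T.app b).toFunctor :=
            congrArg Cat.Hom.toFunctor (T.naturality φ).symm
        have key := Functor.congr_hom hφ (GlueHom.app f a)
        simp only [Functor.comp_map] at key
        dsimp only
        rw [key]
        simp only [Category.assoc, eqToHom_trans_assoc, eqToHom_refl, Category.id_comp,
          ← Functor.map_comp, GlueHom.naturality] }
  map_id X := GlueHom.ext' fun a => by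
    show (T.app a).toFunctor.map (𝟙 (X.pt a)) = 𝟙 _
    simp
  map_comp f g := GlueHom.ext' fun a => by
    show (T.app a).toFunctor.map (GlueHom.app f a ≫ GlueHom.app g a) =
      (T.app a).toFunctor.map (GlueHom.app f a) ≫ (T.app a).toFunctor.map (GlueHom.app g a)
    simp

theorem naturality_comp_app (T : F ⟶ G) {a b : A} (φ : a ⟶ b) :
    (F.map φ).toFunctor ⋙ (T.app b).toFunctor = (T.app a).toFunctor ⋙ (G.map φ).toFunctor :=
  congrArg Cat.Hom.toFunctor (T.naturality φ)

/-- Under `T.app b`, both sides of a square in `Glue(F)` become the corresponding sides of its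
image in `Glue(G)`, precomposed with the same transport along `naturality_comp_app`. -/
theorem naturality_iff_glueMap (T : F ⟶ G) [∀ a, (T.app a).toFunctor.Faithful]
    {X Y : GlueObj F} (f : ∀ a, X.pt a ⟶ Y.pt a) {a b : A} (φ : a ⟶ b) :
    (F.map φ).toFunctor.map (f a) ≫ Y.glue φ = X.glue φ ≫ f b ↔
      (G.map φ).toFunctor.map ((T.app a).toFunctor.map (f a)) ≫ ((glueMap T).obj Y).glue φ =
        ((glueMap T).obj X).glue φ ≫ (T.app b).toFunctor.map (f b) := by
  have transport := Functor.congr_hom (naturality_comp_app T φ) (f a)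
  simp only [Functor.comp_map] at transport
  rw [← (T.app b).toFunctor.map_injective.eq_iff, Functor.map_comp, Functor.map_comp, transport]
  simp only [glueMap, Category.assoc]
  exact eqToHom_comp_iff _ _ _

instance glueMap_faithful (T : F ⟶ G) [∀ a, (T.app a).toFunctor.Faithful] :
    (glueMap T).Faithful where
  map_injective h := GlueHom.ext' fun a =>
    (T.app a).toFunctor.map_injective (congrArg (fun f => GlueHom.app f a) h)

instance glueMap_full (T : F ⟶ G) [∀ a, (T.app a).toFunctor.Full]
    [∀ a, (T.app a).toFunctor.Faithful] : (glueMap T).Full where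
  map_surjective {X Y} g := by
    obtain ⟨f, hf⟩ : ∃ f : ∀ a, X.pt a ⟶ Y.pt a, ∀ a, (T.app a).toFunctor.map (f a) = g.app a :=
      ⟨fun a => (T.app a).toFunctor.preimage (g.app a), fun a => Functor.map_preimage _ _⟩
    refine ⟨{ app := f, naturality := fun φ => (naturality_iff_glueMap T f φ).2 ?_ },
      GlueHom.ext' hf⟩
    rw [hf, hf]
    exact g.naturality φ

/-- Let `A` be a small category, `F, G : A ⥤ Cat`, and `T : F ⟹ G`
a natural transformation such that for every object `a` of `A` the functor
`T.app a : F.obj a ⥤ G.obj a` is fully faithful.  Then the induced functor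
`Glue(T) : Glue(F) ⥤ Glue(G)` between the lax limits is fully faithful. -/
theorem glueMap_full_and_faithful (T : F ⟶ G)
    (hfull : ∀ a : A, (T.app a).toFunctor.Full) (hfaithful : ∀ a : A, (T.app a).toFunctor.Faithful) :
    (glueMap T).Full ∧ (glueMap T).Faithful :=
  ⟨inferInstance, inferInstance⟩

end LaxLimitGlue
end
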